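/- arXiv:1805.08478 — 2 statements merged into one kernel-verified Lean document; each statement's English description precedes it below -/
import Mathlib

section
/- Let X be a CAT(0) cube complex and let x1, x2, x, y1, y2, y ∈ ∂X satisfy x1 op_x x2 and y1 op_y y2. Set m_x := m(x1,x2,x) ∈ X and m_y := m(y1,y2,y) ∈ X. Then d(m_x, m_y) = (y1·y2)_{m_x} + |(y1·y)_{m_x} − (y2·y)_{m_x}|. -/
/-!
We use the standard combinatorial model of a CAT(0) cube complex: it is identified
with its vertex set endowed with the combinatorial (ℓ¹) metric, i.e. with a median
graph `G` on a vertex type `V`.  Halfspaces are realised as the vertex sets of the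
two sides of the hyperplane dual to an edge, the Roller compactification `X̄` is the
set of ultrafilters of halfspaces, vertices embedding via principal ultrafilters,
and the Roller boundary `∂X` consists of the non-principal ultrafilters.
-/

open scoped ENNReal
open Set

namespace CCCR

variable {V V' : Type*}

/-- The interval between two vertices w.r.t. the combinatorial metric. -/
def vInterval (G : SimpleGraph V) (u v : V) : Set V :=
  {w : V | G.dist u w + G.dist w v = G.dist u v}

/-- Combinatorial model of a CAT(0) cube complex (identified with its vertex set,
endowed with the combinatorial metric): a connected median graph. -/
def IsCCC (G : SimpleGraph V) : Prop :=
  G.Connected ∧ ∀ x y z : V, ∃! m : V,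
    m ∈ vInterval G x y ∧ m ∈ vInterval G y z ∧ m ∈ vInterval G z x

/-- Halfspaces of the cube complex: the sides of the hyperplane dual to an edge. -/
def IsHalfspace (G : SimpleGraph V) (h : Set V) : Prop :=
  ∃ u v : V, G.Adj u v ∧ h = {w : V | G.dist w v < G.dist w u}

/-- The halfspace dual to the (oriented) edge `(u,v)` containing `v`. -/
def edgeHalf (G : SimpleGraph V) (u v : V) : Set V :=
  {w : V | G.dist w v < G.dist w u}

/-- The hyperplane (wall) dual to the edge `(u,v)`, recorded as its pair of sides. -/
def wallOf (G : SimpleGraph V) (u v : V) : Set (Set V) :=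
  {edgeHalf G u v, (edgeHalf G u v)ᶜ}

/-- Two (necessarily distinct) hyperplanes, with respective sides `h` and `k`,
are transverse: all four quarter-spaces are nonempty. -/
def Transv (h k : Set V) : Prop :=
  (h ∩ k).Nonempty ∧ (h ∩ kᶜ).Nonempty ∧ (hᶜ ∩ k).Nonempty ∧ (hᶜ ∩ kᶜ).Nonempty

/-- An ultrafilter of halfspaces: a point of the Roller compactification X̄.
It contains exactly one side of each hyperplane, and any two members intersect. -/
def IsUltra (G : SimpleGraph V) (σ : Set (Set V)) : Prop :=
  (∀ h ∈ σ, IsHalfspace G h) ∧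
  (∀ h : Set V, IsHalfspace G h → (h ∈ σ ↔ hᶜ ∉ σ)) ∧
  (∀ h ∈ σ, ∀ k ∈ σ, (h ∩ k).Nonempty)

/-- The principal ultrafilter of a vertex, i.e. the image of `v` in X̄. -/
def princ (G : SimpleGraph V) (v : V) : Set (Set V) :=
  {h : Set V | IsHalfspace G h ∧ v ∈ h}

/-- A point of the Roller boundary ∂X = X̄ ∖ X: a non-principal ultrafilter. -/
def IsBdryPt (G : SimpleGraph V) (σ : Set (Set V)) : Prop :=
  IsUltra G σ ∧ ∀ v : V, σ ≠ princ G v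

/-- The Roller boundary ∂X as a type. -/
abbrev Bdry (G : SimpleGraph V) : Type _ := {σ : Set (Set V) // IsBdryPt G σ}

/-- The Gromov product (x·y)_v = #𝒲(v | x, y) ∈ ℕ ∪ {+∞}, counted through the
sides containing both x and y but not v. -/
noncomputable def grom (_G : SimpleGraph V) (v : V) (x y : Set (Set V)) : ℕ∞ :=
  {h : Set V | h ∈ x ∧ h ∈ y ∧ v ∉ h}.encard

/-- The embedding ℕ ∪ {+∞} → ℤ ∪ {±∞}. -/
noncomputable def toE (n : ℕ∞) : EReal := ((n : ℝ≥0∞) : EReal)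

/-- The cross ratio cr_v(x,y,z,w) = (x·z)_v + (y·w)_v − (x·w)_v − (y·z)_v ∈ ℤ ∪ {±∞}. -/
noncomputable def crv (G : SimpleGraph V) (v : V) (x y z w : Set (Set V)) : EReal :=
  toE (grom G v x z) + toE (grom G v y w) - toE (grom G v x w) - toE (grom G v y z)

/-- The triple of sums of Gromov products attached to a 4-tuple. -/
noncomputable def tripod (G : SimpleGraph V) (v : V) (x y z w : Set (Set V)) :
    ℕ∞ × ℕ∞ × ℕ∞ :=
  (grom G v x y + grom G v z w, grom G v x z + grom G v y w, grom G v x w + grom G v y z)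

/-- (x,y,z,w) ∈ 𝒜 w.r.t. the basepoint v: at most one of the three sums is infinite. -/
def inA (G : SimpleGraph V) (v : V) (x y z w : Set (Set V)) : Prop :=
  ((tripod G v x y z w).1 ≠ ⊤ ∧ (tripod G v x y z w).2.1 ≠ ⊤) ∨
  ((tripod G v x y z w).1 ≠ ⊤ ∧ (tripod G v x y z w).2.2 ≠ ⊤) ∨
  ((tripod G v x y z w).2.1 ≠ ⊤ ∧ (tripod G v x y z w).2.2 ≠ ⊤)

/-- (x,y,z,w) ∈ 𝒜 (this is independent of the basepoint). -/
def memA (G : SimpleGraph V) (x y z w : Set (Set V)) : Prop :=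
  ∀ v : V, inA G v x y z w

/-- Two triples in (ℕ ∪ {+∞})³ are equivalent if they differ by adding a constant
n ∈ ℕ to all three entries. -/
def TripEquiv (p q : ℕ∞ × ℕ∞ × ℕ∞) : Prop :=
  (∃ n : ℕ, p.1 = q.1 + (n : ℕ∞) ∧ p.2.1 = q.2.1 + (n : ℕ∞) ∧ p.2.2 = q.2.2 + (n : ℕ∞)) ∨
  (∃ n : ℕ, q.1 = p.1 + (n : ℕ∞) ∧ q.2.1 = p.2.1 + (n : ℕ∞) ∧ q.2.2 = p.2.2 + (n : ℕ∞))

/-- crt(x,y,z,w) = ⟪a:b:c⟫ (the cross ratio triple is independent of the basepoint,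
so we require the equality of classes at every basepoint). -/
def crtEq (G : SimpleGraph V) (x y z w : Set (Set V)) (a b c : ℕ∞) : Prop :=
  ∀ v : V, TripEquiv (tripod G v x y z w) (a, b, c)

/-- The median of three points of X̄. -/
def med (x y z : Set (Set V)) : Set (Set V) := (x ∩ y) ∪ (y ∩ z) ∪ (z ∩ x)

/-- The interval I(x,y) ⊆ X̄ between two points of X̄. -/
def rInterval (G : SimpleGraph V) (x y : Set (Set V)) : Set (Set (Set V)) :=
  {σ : Set (Set V) | IsUltra G σ ∧ x ∩ y ⊆ σ}

/-- `Op G x y z` : x and y are opposite with respect to z, i.e. the median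
m = m(x,y,z) lies in X and I(x,y) = I(x,m) ∪ I(m,y). -/
def Op (G : SimpleGraph V) (x y z : Set (Set V)) : Prop :=
  (∃ p : V, med x y z = princ G p) ∧
  rInterval G x y = rInterval G x (med x y z) ∪ rInterval G (med x y z) y

/-- A geodesic ray (based at `r 0`). -/
def IsGeodRay (G : SimpleGraph V) (r : ℕ → V) : Prop :=
  (∀ n : ℕ, G.Adj (r n) (r (n + 1))) ∧
  ∀ m n : ℕ, m ≤ n → G.dist (r m) (r n) = n - m

/-- A bi-infinite geodesic line. -/
def IsGeodLine (G : SimpleGraph V) (L : ℤ → V) : Prop :=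
  (∀ n : ℤ, G.Adj (L n) (L (n + 1))) ∧
  ∀ m n : ℤ, m ≤ n → (G.dist (L m) (L n) : ℤ) = n - m

/-- The set 𝒲(r) of hyperplanes crossed by (the edges of) a ray. -/
def rayWalls (G : SimpleGraph V) (r : ℕ → V) : Set (Set (Set V)) :=
  {W : Set (Set V) | ∃ n : ℕ, W = wallOf G (r n) (r (n + 1))}

/-- A hyperplane is adjacent to `v` if it is dual to an edge incident to `v`. -/
def WallAdjTo (G : SimpleGraph V) (v : V) (W : Set (Set V)) : Prop :=
  ∃ u : V, G.Adj v u ∧ W = wallOf G v u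

/-- A straight ray: no two of the hyperplanes it crosses are transverse. -/
def RayStraight (G : SimpleGraph V) (r : ℕ → V) : Prop :=
  ∀ m n : ℕ, ¬ Transv (edgeHalf G (r m) (r (m + 1))) (edgeHalf G (r n) (r (n + 1)))

/-- A straight line: no two of the hyperplanes it crosses are transverse. -/
def LineStraight (G : SimpleGraph V) (L : ℤ → V) : Prop :=
  ∀ m n : ℤ, ¬ Transv (edgeHalf G (L m) (L (m + 1))) (edgeHalf G (L n) (L (n + 1)))

/-- The endpoint at infinity r⁺ ∈ ∂X of a ray: the ultrafilter of those halfspaces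
containing all but finitely many of its vertices. -/
def rayEnd (G : SimpleGraph V) (r : ℕ → V) : Set (Set V) :=
  {h : Set V | IsHalfspace G h ∧ ∃ N : ℕ, ∀ n : ℕ, N ≤ n → r n ∈ h}

/-- A straight point of the Roller boundary: the endpoint at infinity of a straight ray. -/
def IsStraightPt (G : SimpleGraph V) (x : Set (Set V)) : Prop :=
  ∃ r : ℕ → V, IsGeodRay G r ∧ RayStraight G r ∧ rayEnd G r = x

/-- x and y are the two endpoints at infinity of the line L. -/
def LineEnds (G : SimpleGraph V) (L : ℤ → V) (x y : Set (Set V)) : Prop :=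
  rayEnd G (fun n : ℕ => L (n : ℤ)) = x ∧ rayEnd G (fun n : ℕ => L (-(n : ℤ))) = y

/-- The edges from `v` to `a` and from `v` to `b` span a square. -/
def SpansSquare (G : SimpleGraph V) (v a b : V) : Prop :=
  ∃ w : V, w ≠ v ∧ G.Adj a w ∧ G.Adj b w

/-- An extremal vertex: some edge at `v` spans a square with every other edge at `v`. -/
def Extremal (G : SimpleGraph V) (v : V) : Prop :=
  ∃ a : V, G.Adj v a ∧ ∀ b : V, G.Adj v b → b ≠ a → SpansSquare G v a b

/-- The cube complex has no extremal vertices. -/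
def NoExtremal (G : SimpleGraph V) : Prop := ∀ v : V, ¬ Extremal G v

/-- A skinny vertex: exactly two incident edges. -/
def Skinny (G : SimpleGraph V) (v : V) : Prop := {u : V | G.Adj v u}.encard = 2

/-- A skinny ray: a geodesic ray whose initial vertex has at least three incident
edges and all of whose other vertices are skinny. -/
def IsSkinnyRay (G : SimpleGraph V) (r : ℕ → V) : Prop :=
  IsGeodRay G r ∧ 3 ≤ {u : V | G.Adj (r 0) u}.encard ∧ ∀ n : ℕ, 1 ≤ n → Skinny G (r n)

/-- (The vertex set of) a cube of the complex: a subset inducing a hypercube graph. -/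
def IsCube (G : SimpleGraph V) (c : Set V) : Prop :=
  ∃ (n : ℕ) (e : c ≃ (Fin n → Bool)),
    ∀ a b : c, G.Adj (a : V) (b : V) ↔ ∃! i : Fin n, e a i ≠ e b i

/-- A maximal cube. -/
def IsMaxCube (G : SimpleGraph V) (c : Set V) : Prop :=
  IsCube G c ∧ ∀ c' : Set V, IsCube G c' → c ⊆ c' → c' = c

/-- Completeness: there is no infinite ascending chain of cubes. -/
def CubeComplete (G : SimpleGraph V) : Prop :=
  ¬ ∃ c : ℕ → Set V, (∀ n : ℕ, IsCube G (c n)) ∧ ∀ n : ℕ, c n ⊂ c (n + 1)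

/-- No free faces: no non-maximal cube is contained in a unique maximal cube. -/
def NoFreeFaces (G : SimpleGraph V) : Prop :=
  ∀ c : Set V, IsCube G c → ¬ IsMaxCube G c → ¬ ∃! m : Set V, IsMaxCube G m ∧ c ⊆ m

/-- #𝒲(x, z | y, w): the number of hyperplanes separating x and z from y and w,
counted through the sides containing x and z. -/
noncomputable def sepCount (x z y w : Set (Set V)) : ℕ∞ :=
  {h : Set V | h ∈ x ∧ h ∈ z ∧ h ∉ y ∧ h ∉ w}.encard

/-- A Möbius map between Roller boundaries: it maps 𝒜(X) into 𝒜(Y) and preserves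
cross ratios. -/
def Mobius (G : SimpleGraph V) (G' : SimpleGraph V') (f : Bdry G → Bdry G') : Prop :=
  ∀ x y z w : Bdry G, memA G x.1 y.1 z.1 w.1 →
    memA G' (f x).1 (f y).1 (f z).1 (f w).1 ∧
    ∀ (v : V) (v' : V'),
      crv G' v' (f x).1 (f y).1 (f z).1 (f w).1 = crv G v x.1 y.1 z.1 w.1

/-- The induced action of a cubical isomorphism on X̄: an ultrafilter is mapped to
the set of images of its halfspaces. -/
def mapUltra (φ : V → V') (σ : Set (Set V)) : Set (Set V') :=
  (fun h : Set V => φ '' h) '' σ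

/-- The standard cubulation of ℝ: vertex set ℤ, edges between consecutive integers. -/
def zline : SimpleGraph ℤ := SimpleGraph.fromRel (fun m n => n = m + 1)

end CCCR

open CCCR

/-!
In a median graph, `d(p, q)` is the number of halfspaces containing `q` but not `p`: walking along
a geodesic from `p` to `q`, each edge crosses exactly one new halfspace, because an edge leaving a
halfspace defines it (transitivity of the relation `Θ`, proved through squares).

Since `m(y1, y2, y)` is the vertex `q`, the halfspaces containing `q` but not `p` are those of
`y1 ∩ y2`, `y1 ∩ y` or `y2 ∩ y` missing `p`, and inclusion–exclusion gives
`(y1·y2)_p + |(y1·y)_p − (y2·y)_p|` once one of `𝒲(p | y1, y)`, `𝒲(p | y2, y)` contains the other.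
This nesting is where `y1 op_y y2` enters: halfspaces `h ∈ y1 ∩ y`, `h ∉ y2` and `k ∈ y2 ∩ y`,
`k ∉ y1`, both missing `p`, would put `m(y1, y2, p)` in `I(y1, y2)` but in neither `I(y1, m)`
nor `I(m, y2)`.
-/

lemma SimpleGraph.Connected.exists_adj_dist_eq {V : Type*} {G : SimpleGraph V}
    (hc : G.Connected) {u v : V} {n : ℕ} (huv : G.dist u v = n + 1) :
    ∃ w, G.Adj u w ∧ G.dist w v = n := by
  obtain ⟨W, hW⟩ := hc.exists_walk_length_eq_dist u v
  cases W with
  | nil => simp at huv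
  | @cons _ w _ hadj W' =>
    refine ⟨w, hadj, le_antisymm ?_ ?_⟩
    · have := SimpleGraph.dist_le W'
      simp only [SimpleGraph.Walk.length_cons] at hW
      omega
    · have := hc.dist_triangle (u := u) (v := w) (w := v)
      rw [SimpleGraph.dist_eq_one_iff_adj.mpr hadj] at this
      omega

lemma Set.encard_union_eq_add_tsub {α : Type*} {s t : Set α}
    (hst : (s ∩ t).encard ≠ ⊤) : (s ∪ t).encard = s.encard + (t.encard - (s ∩ t).encard) := by
  rw [← Set.union_sdiff_self, Set.encard_union_eq Set.disjoint_sdiff_right,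
    ← Set.encard_sdiff Set.inter_subset_right (Set.encard_ne_top_iff.mp hst),
    Set.sdiff_inter_self_eq_sdiff]

namespace CCCR

variable {V : Type*}

section MedianGraph

variable {G : SimpleGraph V}

namespace IsCCC

lemma dist_eq_add_one_or_of_adj (hG : IsCCC G) {u v : V} (huv : G.Adj u v) (s : V) :
    G.dist s u = G.dist s v + 1 ∨ G.dist s v = G.dist s u + 1 := by
  obtain ⟨m, ⟨h1, h2, h3⟩, -⟩ := hG.2 u v s
  simp only [vInterval, Set.mem_ofPred_eq] at h1 h2 h3
  have hd : G.dist u v = 1 := SimpleGraph.dist_eq_one_iff_adj.mpr huv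
  have hd' : G.dist v u = 1 := SimpleGraph.dist_eq_one_iff_adj.mpr huv.symm
  have hsu : G.dist u s = G.dist s u := SimpleGraph.dist_comm
  have hsv : G.dist v s = G.dist s v := SimpleGraph.dist_comm
  rcases (by omega : G.dist u m = 0 ∨ G.dist m v = 0) with h0 | h0
  · rw [← hG.1.dist_eq_zero_iff.mp h0] at h2
    omega
  · rw [hG.1.dist_eq_zero_iff.mp h0] at h3
    omega

lemma dist_eq_add_one_or_of_adj' (hG : IsCCC G) {u v : V} (huv : G.Adj u v) (s : V) :
    G.dist u s = G.dist v s + 1 ∨ G.dist v s = G.dist u s + 1 := by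
  simpa only [SimpleGraph.dist_comm (v := s)] using hG.dist_eq_add_one_or_of_adj huv s

lemma not_adj_of_adj_of_adj (hG : IsCCC G) {a b c : V} (hab : G.Adj a b) (hbc : G.Adj b c) :
    ¬ G.Adj a c := fun hac => by
  have := hG.dist_eq_add_one_or_of_adj hab c
  rw [SimpleGraph.dist_eq_one_iff_adj.mpr hac.symm,
    SimpleGraph.dist_eq_one_iff_adj.mpr hbc.symm] at this
  omega

lemma dist_eq_two_of_adj_of_adj (hG : IsCCC G) {a b c : V} (hab : G.Adj a b)
    (hbc : G.Adj b c) (hac : a ≠ c) : G.dist a c = 2 := by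
  have htri := hG.1.dist_triangle (u := a) (v := b) (w := c)
  rw [SimpleGraph.dist_eq_one_iff_adj.mpr hab, SimpleGraph.dist_eq_one_iff_adj.mpr hbc] at htri
  have h0 : G.dist a c ≠ 0 := fun h => hac (hG.1.dist_eq_zero_iff.mp h)
  have h1 : G.dist a c ≠ 1 := fun h =>
    hG.not_adj_of_adj_of_adj hab hbc (SimpleGraph.dist_eq_one_iff_adj.mp h)
  omega

/-- Median graphs contain no `K_{2,3}`: both `b` and `d` would be medians of `a, c, e`. -/
lemma eq_of_adj_of_adj_of_adj (hG : IsCCC G) {a c e b d : V}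
    (hab : G.Adj a b) (hcb : G.Adj c b) (heb : G.Adj e b)
    (had : G.Adj a d) (hcd : G.Adj c d) (hed : G.Adj e d)
    (hac : a ≠ c) (hae : a ≠ e) (hce : c ≠ e) : b = d := by
  have hac2 := hG.dist_eq_two_of_adj_of_adj hab hcb.symm hac
  have hce2 := hG.dist_eq_two_of_adj_of_adj hcb heb.symm hce
  have hea2 := hG.dist_eq_two_of_adj_of_adj heb hab.symm hae.symm
  have hdist : ∀ {x y : V}, G.Adj x y → G.dist x y = 1 ∧ G.dist y x = 1 := fun h =>
    ⟨SimpleGraph.dist_eq_one_iff_adj.mpr h, SimpleGraph.dist_eq_one_iff_adj.mpr h.symm⟩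
  obtain ⟨m, -, hm⟩ := hG.2 a c e
  have hmedian : ∀ z, G.Adj a z → G.Adj c z → G.Adj e z → z = m := fun z haz hcz hez => by
    obtain ⟨h1, h2⟩ := hdist haz
    obtain ⟨h3, h4⟩ := hdist hcz
    obtain ⟨h5, h6⟩ := hdist hez
    refine hm z ⟨?_, ?_, ?_⟩ <;> simp only [vInterval, Set.mem_ofPred_eq] <;> omega
  exact (hmedian b hab hcb heb).trans (hmedian d had hcd hed).symm

lemma compl_edgeHalf (hG : IsCCC G) {u v : V} (huv : G.Adj u v) :
    (edgeHalf G u v)ᶜ = edgeHalf G v u := by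
  ext s
  have := hG.dist_eq_add_one_or_of_adj huv s
  simp only [edgeHalf, Set.mem_compl_iff, Set.mem_ofPred_eq]
  omega

lemma isHalfspace_compl (hG : IsCCC G) {h : Set V} (hh : IsHalfspace G h) :
    IsHalfspace G hᶜ := by
  obtain ⟨u, v, huv, rfl⟩ := hh
  exact ⟨v, u, huv.symm, hG.compl_edgeHalf huv⟩

lemma mem_edgeHalf_of_square (hG : IsCCC G) {a b c d : V}
    (hab : G.Adj a b) (hbc : G.Adj b c) (hcd : G.Adj c d) (hda : G.Adj d a) (hac : a ≠ c)
    (hbd : b ≠ d) {s : V} (hs : s ∈ edgeHalf G a b) : s ∈ edgeHalf G d c := by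
  simp only [edgeHalf, Set.mem_ofPred_eq] at hs ⊢
  by_contra hsc
  have := hG.dist_eq_add_one_or_of_adj hab s
  have := hG.dist_eq_add_one_or_of_adj hbc s
  have := hG.dist_eq_add_one_or_of_adj hcd s
  have := hG.dist_eq_add_one_or_of_adj hda s
  -- `b, d` lie at distance `k - 1` from `s` and `a, c` at distance `k`: the median of
  -- `s, b, d` is a third common neighbour of `b` and `d`, at distance `k - 2`.
  have hbd2 := hG.dist_eq_two_of_adj_of_adj hab.symm hda.symm hbd
  obtain ⟨μ, ⟨i1, i2, i3⟩, -⟩ := hG.2 s b d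
  simp only [vInterval, Set.mem_ofPred_eq] at i1 i2 i3
  have c1 : G.dist b μ = G.dist μ b := SimpleGraph.dist_comm
  have c2 : G.dist d μ = G.dist μ d := SimpleGraph.dist_comm
  have c3 : G.dist μ s = G.dist s μ := SimpleGraph.dist_comm
  have c4 : G.dist d s = G.dist s d := SimpleGraph.dist_comm
  have hμb : G.Adj μ b := SimpleGraph.dist_eq_one_iff_adj.mp (by omega)
  have hμd : G.Adj μ d := SimpleGraph.dist_eq_one_iff_adj.mp (by omega)
  have hμa : μ ≠ a := by rintro rfl; omega
  have hμc : μ ≠ c := by rintro rfl; omega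
  exact hbd (hG.eq_of_adj_of_adj_of_adj hab hbc.symm hμb hda.symm hcd hμd hac hμa.symm hμc.symm)

lemma edgeHalf_eq_of_square (hG : IsCCC G) {a b c d : V}
    (hab : G.Adj a b) (hbc : G.Adj b c) (hcd : G.Adj c d) (hda : G.Adj d a) (hac : a ≠ c)
    (hbd : b ≠ d) : edgeHalf G a b = edgeHalf G d c :=
  Set.ext fun _ => ⟨hG.mem_edgeHalf_of_square hab hbc hcd hda hac hbd,
    hG.mem_edgeHalf_of_square hcd.symm hbc.symm hab.symm hda.symm hbd.symm hac.symm⟩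

lemma edgeHalf_eq_of_notMem_of_mem (hG : IsCCC G) {u v a b : V} (huv : G.Adj u v)
    (hab : G.Adj a b) (ha : a ∉ edgeHalf G u v) (hb : b ∈ edgeHalf G u v) :
    edgeHalf G a b = edgeHalf G u v := by
  induction hn : G.dist a u generalizing a b with
  | zero =>
    obtain rfl : a = u := hG.1.dist_eq_zero_iff.mp hn
    have hbv : G.dist b v < G.dist b a := hb
    rw [SimpleGraph.dist_comm (u := b) (v := a), SimpleGraph.dist_eq_one_iff_adj.mpr hab] at hbv
    rw [hG.1.dist_eq_zero_iff.mp (Nat.lt_one_iff.mp hbv)]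
  | succ t ih =>
    have ha' : ¬ G.dist a v < G.dist a u := ha
    have hb' : G.dist b v < G.dist b u := hb
    obtain ⟨a', ha'a, ha'u⟩ := hG.1.exists_adj_dist_eq hn
    have := hG.dist_eq_add_one_or_of_adj huv a
    have := hG.dist_eq_add_one_or_of_adj huv b
    have := hG.dist_eq_add_one_or_of_adj huv a'
    have := hG.dist_eq_add_one_or_of_adj' hab u
    have := hG.dist_eq_add_one_or_of_adj' hab v
    have := hG.dist_eq_add_one_or_of_adj' ha'a v
    have had : a' ≠ b := by rintro rfl; omega
    -- The median `c` of `v, a', b` closes the square `a b c a'`, whose edge `a' c` is nearer `u`.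
    have ha'b := hG.dist_eq_two_of_adj_of_adj ha'a.symm hab had
    obtain ⟨c, ⟨i1, i2, i3⟩, -⟩ := hG.2 v a' b
    simp only [vInterval, Set.mem_ofPred_eq] at i1 i2 i3
    have c1 : G.dist v a' = G.dist a' v := SimpleGraph.dist_comm
    have c2 : G.dist v c = G.dist c v := SimpleGraph.dist_comm
    have c3 : G.dist c a' = G.dist a' c := SimpleGraph.dist_comm
    have c4 : G.dist b c = G.dist c b := SimpleGraph.dist_comm
    have ha'c : G.Adj a' c := SimpleGraph.dist_eq_one_iff_adj.mp (by omega)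
    have hcb : G.Adj c b := SimpleGraph.dist_eq_one_iff_adj.mp (by omega)
    have := hG.dist_eq_add_one_or_of_adj huv c
    have := hG.dist_eq_add_one_or_of_adj' hcb u
    have hsq := hG.edgeHalf_eq_of_square hab hcb.symm ha'c.symm ha'a.symm
      (by rintro rfl; omega) had.symm
    rw [hsq]
    exact ih ha'c (fun h : G.dist a' v < G.dist a' u => by omega)
      (show G.dist c v < G.dist c u by omega) ha'u

lemma encard_separating_eq_dist (hG : IsCCC G) (p q : V) :
    {h : Set V | IsHalfspace G h ∧ q ∈ h ∧ p ∉ h}.encard = G.dist p q := by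
  induction hn : G.dist p q generalizing p with
  | zero =>
    obtain rfl : p = q := hG.1.dist_eq_zero_iff.mp hn
    simp
  | succ n ih =>
    obtain ⟨p', hpp', hp'q⟩ := hG.1.exists_adj_dist_eq hn
    have hqp : G.dist q p = n + 1 := SimpleGraph.dist_comm.trans hn
    have hqp' : G.dist q p' = n := SimpleGraph.dist_comm.trans hp'q
    have hsplit : {h : Set V | IsHalfspace G h ∧ q ∈ h ∧ p ∉ h} =
        insert (edgeHalf G p p') {h : Set V | IsHalfspace G h ∧ q ∈ h ∧ p' ∉ h} := by
      ext h
      simp only [Set.mem_insert_iff, Set.mem_ofPred_eq]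
      constructor
      · rintro ⟨hh, hq, hp⟩
        by_cases hp' : p' ∈ h
        · obtain ⟨u, v, huv, rfl⟩ := hh
          exact .inl (hG.edgeHalf_eq_of_notMem_of_mem huv hpp' hp hp').symm
        · exact .inr ⟨hh, hq, hp'⟩
      · rintro (rfl | ⟨hh, hq, hp'⟩)
        · refine ⟨⟨p, p', hpp', rfl⟩, show G.dist q p' < G.dist q p by omega, ?_⟩
          simp [edgeHalf]
        · refine ⟨hh, hq, fun hp => ?_⟩
          obtain ⟨u, v, huv, rfl⟩ := hh
          have hqp'p : q ∈ edgeHalf G p' p := by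
            rwa [hG.edgeHalf_eq_of_notMem_of_mem huv hpp'.symm hp' hp]
          have : G.dist q p < G.dist q p' := hqp'p
          omega
    have hnew : edgeHalf G p p' ∉ {h : Set V | IsHalfspace G h ∧ q ∈ h ∧ p' ∉ h} :=
      fun h => h.2.2 (by simp [edgeHalf, SimpleGraph.dist_eq_one_iff_adj.mpr hpp'.symm])
    rw [hsplit, Set.encard_insert_of_notMem hnew, ih p' hp'q]
    rfl

end IsCCC

namespace IsUltra

variable {σ : Set (Set V)} {h : Set V}

lemma compl_mem (hσ : IsUltra G σ) (hh : IsHalfspace G h) (hhσ : h ∉ σ) : hᶜ ∈ σ :=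
  not_not.mp fun hc => hhσ ((hσ.2.1 h hh).mpr hc)

lemma compl_notMem (hσ : IsUltra G σ) (hhσ : h ∈ σ) : hᶜ ∉ σ :=
  (hσ.2.1 h (hσ.1 h hhσ)).mp hhσ

end IsUltra

lemma isUltra_princ (hG : IsCCC G) (p : V) : IsUltra G (princ G p) :=
  ⟨fun _ hh => hh.1,
    fun _ hh => ⟨fun hp hc => hc.2 hp.2,
      fun hc => ⟨hh, not_not.mp fun hp => hc ⟨hG.isHalfspace_compl hh, hp⟩⟩⟩,
    fun _ hh _ hk => ⟨p, hh.2, hk.2⟩⟩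

lemma isUltra_med {x y z : Set (Set V)} (hx : IsUltra G x) (hy : IsUltra G y)
    (hz : IsUltra G z) : IsUltra G (med x y z) := by
  refine ⟨fun h hh => ?_, fun h hh => ?_, fun h hh k hk => ?_⟩
  · rcases hh with (hh | hh) | hh
    exacts [hx.1 h hh.1, hy.1 h hh.1, hz.1 h hh.1]
  · have hxc : hᶜ ∈ x ↔ h ∉ x := by rw [hx.2.1 h hh, not_not]
    have hyc : hᶜ ∈ y ↔ h ∉ y := by rw [hy.2.1 h hh, not_not]
    have hzc : hᶜ ∈ z ↔ h ∉ z := by rw [hz.2.1 h hh, not_not]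
    simp only [med, Set.mem_union, Set.mem_inter_iff, hxc, hyc, hzc]
    tauto
  · -- two majorities among three ultrafilters share one of them
    rcases hh with (hh | hh) | hh <;> rcases hk with (hk | hk) | hk
    exacts [hx.2.2 h hh.1 k hk.1, hy.2.2 h hh.2 k hk.1, hx.2.2 h hh.1 k hk.2,
      hy.2.2 h hh.1 k hk.2, hy.2.2 h hh.1 k hk.1, hz.2.2 h hh.2 k hk.1,
      hx.2.2 h hh.2 k hk.1, hz.2.2 h hh.1 k hk.2, hz.2.2 h hh.1 k hk.1]

lemma subset_or_subset_of_op (hG : IsCCC G) {y1 y2 y : Set (Set V)} (hy1 : IsUltra G y1)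
    (hy2 : IsUltra G y2) (hop : Op G y1 y2 y) (p : V) :
    {g : Set V | g ∈ y1 ∧ g ∈ y ∧ p ∉ g} ⊆ {g : Set V | g ∈ y2 ∧ g ∈ y ∧ p ∉ g} ∨
      {g : Set V | g ∈ y2 ∧ g ∈ y ∧ p ∉ g} ⊆ {g : Set V | g ∈ y1 ∧ g ∈ y ∧ p ∉ g} := by
  refine or_iff_not_imp_left.mpr fun h12 k ⟨hk2, hky, hpk⟩ => not_not.mp fun hk1 => ?_
  obtain ⟨h, ⟨hh1, hhy, hph⟩, hh2⟩ := Set.not_subset.mp h12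
  replace hh2 : h ∉ y2 := fun h2 => hh2 ⟨h2, hhy, hph⟩
  replace hk1 : k ∉ y1 := fun k1 => hk1 ⟨k1, hky, hpk⟩
  have hσ := isUltra_med hy1 hy2 (isUltra_princ hG p)
  have hhc : hᶜ ∈ med y1 y2 (princ G p) :=
    .inl (.inr ⟨hy2.compl_mem (hy1.1 h hh1) hh2, hG.isHalfspace_compl (hy1.1 h hh1), hph⟩)
  have hkc : kᶜ ∈ med y1 y2 (princ G p) :=
    .inr ⟨⟨hG.isHalfspace_compl (hy2.1 k hk2), hpk⟩, hy1.compl_mem (hy2.1 k hk2) hk1⟩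
  have hI : med y1 y2 (princ G p) ∈ rInterval G y1 y2 := ⟨hσ, fun g hg => .inl (.inl hg)⟩
  rw [hop.2] at hI
  rcases hI with ⟨-, hsub⟩ | ⟨-, hsub⟩
  · exact hσ.compl_notMem (hsub ⟨hh1, .inr ⟨hhy, hh1⟩⟩) hhc
  · exact hσ.compl_notMem (hsub ⟨.inl (.inr ⟨hk2, hky⟩), hk2⟩) hkc

end MedianGraph

lemma med_comm (x y z : Set (Set V)) : med x y z = med y x z := by
  ext g
  simp only [med, Set.mem_union, Set.mem_inter_iff]
  tauto

lemma grom_comm (G : SimpleGraph V) (v : V) (x y : Set (Set V)) :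
    grom G v x y = grom G v y x := by
  simp only [grom, and_left_comm]

section Counting

variable {G : SimpleGraph V} {x y z : Set (Set V)}

lemma encard_med_notMem_of_subset (v : V) (hfin : {g | g ∈ med x y z ∧ v ∉ g}.encard ≠ ⊤)
    (hxy : {g | g ∈ x ∧ g ∈ z ∧ v ∉ g} ⊆ {g | g ∈ y ∧ g ∈ z ∧ v ∉ g}) :
    {g | g ∈ med x y z ∧ v ∉ g}.encard = grom G v x y + (grom G v y z - grom G v x z) := by
  have hunion : {g | g ∈ med x y z ∧ v ∉ g} =
      {g | g ∈ x ∧ g ∈ y ∧ v ∉ g} ∪ {g | g ∈ y ∧ g ∈ z ∧ v ∉ g} := by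
    ext g
    have := @hxy g
    simp only [med, Set.mem_union, Set.mem_inter_iff, Set.mem_ofPred_eq] at this ⊢
    tauto
  have hinter : {g | g ∈ x ∧ g ∈ y ∧ v ∉ g} ∩ {g | g ∈ y ∧ g ∈ z ∧ v ∉ g} =
      {g | g ∈ x ∧ g ∈ z ∧ v ∉ g} := by
    ext g
    have := @hxy g
    simp only [Set.mem_inter_iff, Set.mem_ofPred_eq] at this ⊢
    tauto
  rw [hunion] at hfin ⊢
  rw [Set.encard_union_eq_add_tsub (ne_top_of_le_ne_top hfin
    (Set.encard_le_encard (Set.inter_subset_left.trans Set.subset_union_left))), hinter]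
  rfl

lemma encard_med_notMem (v : V) (hfin : {g | g ∈ med x y z ∧ v ∉ g}.encard ≠ ⊤)
    (hxy : {g | g ∈ x ∧ g ∈ z ∧ v ∉ g} ⊆ {g | g ∈ y ∧ g ∈ z ∧ v ∉ g} ∨
      {g | g ∈ y ∧ g ∈ z ∧ v ∉ g} ⊆ {g | g ∈ x ∧ g ∈ z ∧ v ∉ g}) :
    {g | g ∈ med x y z ∧ v ∉ g}.encard = grom G v x y +
      (max (grom G v x z) (grom G v y z) - min (grom G v x z) (grom G v y z)) := by
  rcases hxy with hxy | hyx
  · have hle : grom G v x z ≤ grom G v y z := Set.encard_le_encard hxy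
    rw [max_eq_right hle, min_eq_left hle]
    exact encard_med_notMem_of_subset v hfin hxy
  · have hle : grom G v y z ≤ grom G v x z := Set.encard_le_encard hyx
    rw [max_eq_left hle, min_eq_right hle, grom_comm, med_comm]
    rw [med_comm] at hfin
    exact encard_med_notMem_of_subset v hfin hyx

end Counting

end CCCR

theorem stmt10_general {V : Type*} (G : SimpleGraph V) (hG : IsCCC G)
    (y1 y2 y : Set (Set V))
    (hy1 : IsBdryPt G y1) (hy2 : IsBdryPt G y2)
    (hopy : Op G y1 y2 y)
    (p q : V) (hq : med y1 y2 y = princ G q) :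
    (G.dist p q : ℕ∞) = grom G p y1 y2 +
      (max (grom G p y1 y) (grom G p y2 y) - min (grom G p y1 y) (grom G p y2 y)) := by
  have hsep : {h : Set V | IsHalfspace G h ∧ q ∈ h ∧ p ∉ h} = {g | g ∈ med y1 y2 y ∧ p ∉ g} := by
    rw [hq]
    ext g
    simp only [princ, Set.mem_ofPred_eq, and_assoc]
  have hdist := hG.encard_separating_eq_dist p q
  rw [hsep] at hdist
  rw [← hdist]
  exact encard_med_notMem p (hdist ▸ ENat.natCast_ne_top _)
    (subset_or_subset_of_op hG hy1.1 hy2.1 hopy p)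

/-- Proposition `d(mx,my)`: with `x1 op_x x2` and `y1 op_y y2`,
and medians the vertices `p = m(x1,x2,x)` and `q = m(y1,y2,y)`, one has
`d(p,q) = (y1·y2)_p + |(y1·y)_p − (y2·y)_p|`. -/
theorem stmt10 {V : Type*} (G : SimpleGraph V) (hG : IsCCC G)
    (x1 x2 x y1 y2 y : Set (Set V))
    (hx1 : IsBdryPt G x1) (hx2 : IsBdryPt G x2) (hx : IsBdryPt G x)
    (hy1 : IsBdryPt G y1) (hy2 : IsBdryPt G y2) (hy : IsBdryPt G y)
    (hopx : Op G x1 x2 x) (hopy : Op G y1 y2 y)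
    (p q : V) (hp : med x1 x2 x = princ G p) (hq : med y1 y2 y = princ G q) :
    (G.dist p q : ℕ∞) = grom G p y1 y2 +
      (max (grom G p y1 y) (grom G p y2 y) - min (grom G p y1 y) (grom G p y2 y)) :=
  stmt10_general G hG y1 y2 y hy1 hy2 hopy p q hq
end

section
/- Let X be a CAT(0) cube complex with at least two vertices and no extremal vertices. For a vertex v ∈ X, the following are equivalent: (1) v is not skinny (i.e., the number of edges incident to v is not exactly 2); (2) there exist straight boundary points x, y, z ∈ ∂ₛX such that m(x,y,z) = v and x op_z y. -/
/-!
We use the standard combinatorial model of a CAT(0) cube complex: it is identified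
with its vertex set endowed with the combinatorial (ℓ¹) metric, i.e. with a median
graph `G` on a vertex type `V`.  Halfspaces are realised as the vertex sets of the
two sides of the hyperplane dual to an edge, the Roller compactification `X̄` is the
set of ultrafilters of halfspaces, vertices embedding via principal ultrafilters,
and the Roller boundary `∂X` consists of the non-principal ultrafilters.
-/

open scoped ENNReal
open Set

open CCCR

/-!
At a vertex `v` that is not extremal, some two edges `va₁`, `va₂` span no square, so their
halfspaces `edgeHalf G v a₁`, `edgeHalf G v a₂` are disjoint; if `v` is not skinny there is a third
edge `va₃`. Absence of extremal vertices extends every edge to a ray whose dual halfspaces are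
nested. Such a ray is a straight geodesic, and any halfspace in its endpoint that misses its origin
`v` lies inside its first halfspace. Hence no halfspace missing `v` contains two of the three
endpoints, so their median is `v`, and the disjointness of the first two halfspaces gives
`x op_z y`. Conversely, if `a, b` are the only neighbours of `v`, an ultrafilter containing both
`edgeHalf G a v` and `edgeHalf G b v` is principal at `v` (Helly's property for halfspaces), while a
median equal to `v` forces one of `x, y, z` to contain both. Throughout, the one genuinely
median-graph input is the convexity of halfspaces.
-/

theorem SimpleGraph.Reachable.exists_adj_dist_add_one {V : Type*} {G : SimpleGraph V} {p r : V}
    (h : G.Reachable p r) (hpr : p ≠ r) : ∃ p₁, G.Adj p p₁ ∧ G.dist p₁ r + 1 = G.dist p r := by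
  obtain ⟨w, hw⟩ := h.exists_walk_length_eq_dist
  cases w with
  | nil => exact absurd rfl hpr
  | cons hadj w =>
    refine ⟨_, hadj, le_antisymm ?_ ?_⟩
    · have := SimpleGraph.dist_le w
      simp only [SimpleGraph.Walk.length_cons] at hw
      omega
    · have := hadj.reachable.dist_triangle_left r
      rw [SimpleGraph.dist_eq_one_iff_adj.mpr hadj] at this
      omega

theorem SimpleGraph.Adj.dist_le_dist_add_one {V : Type*} {G : SimpleGraph V} {p r : V}
    (h : G.Adj p r) (w : V) : G.dist p w ≤ G.dist r w + 1 := by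
  have := h.reachable.dist_triangle_left w
  rw [SimpleGraph.dist_eq_one_iff_adj.mpr h] at this
  omega

namespace CCCR

open SimpleGraph Set

variable {V : Type*} {G : SimpleGraph V} {u v w p q r a b : V}

lemma mem_vInterval_comm : w ∈ vInterval G u v ↔ w ∈ vInterval G v u := by
  have := G.dist_comm (u := u) (v := w)
  have := G.dist_comm (u := w) (v := v)
  have := G.dist_comm (u := u) (v := v)
  show G.dist u w + G.dist w v = G.dist u v ↔ G.dist v w + G.dist w u = G.dist v u
  omega

lemma right_mem_edgeHalf (huv : G.Adj u v) : v ∈ edgeHalf G u v := by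
  show G.dist v v < G.dist v u
  rw [dist_self]
  exact huv.symm.reachable.pos_dist_of_ne huv.ne'

lemma left_notMem_edgeHalf : u ∉ edgeHalf G u v := by
  simp [edgeHalf]

lemma notMem_edgeHalf_of_adj (ha : G.Adj v a) (hb : G.Adj v b) (hab : a ≠ b) :
    a ∉ edgeHalf G v b := by
  intro h
  have h : G.dist a b < G.dist a v := h
  rw [dist_comm (u := a) (v := v), dist_eq_one_iff_adj.mpr ha, Nat.lt_one_iff,
    (ha.symm.reachable.trans hb.reachable).dist_eq_zero_iff] at h
  exact hab h

lemma eq_of_forall_mem_edgeHalf (hc : G.Connected) (h : ∀ c, G.Adj v c → w ∈ edgeHalf G c v) :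
    w = v := by
  by_contra hwv
  obtain ⟨c, hvc, hcw⟩ := (hc v w).exists_adj_dist_add_one (Ne.symm hwv)
  have hw : G.dist w v < G.dist w c := h c hvc
  rw [dist_comm (u := w), dist_comm (u := w)] at hw
  omega

lemma IsCCC.dist_eq_add_one_or (hG : IsCCC G) (huv : G.Adj u v) (w : V) :
    G.dist w u = G.dist w v + 1 ∨ G.dist w v = G.dist w u + 1 := by
  obtain ⟨m, ⟨hwu, huv', hvw⟩, -⟩ := hG.2 w u v
  have hwu : G.dist w m + G.dist m u = G.dist w u := hwu
  have huv' : G.dist u m + G.dist m v = 1 := (dist_eq_one_iff_adj.mpr huv) ▸ huv'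
  have hvw : G.dist v m + G.dist m w = G.dist v w := hvw
  have := G.dist_comm (u := u) (v := m)
  have := G.dist_comm (u := v) (v := m)
  have := G.dist_comm (u := w) (v := m)
  have := G.dist_comm (u := w) (v := v)
  omega

lemma IsCCC.mem_edgeHalf_iff (hG : IsCCC G) (huv : G.Adj u v) :
    w ∈ edgeHalf G u v ↔ G.dist w u = G.dist w v + 1 := by
  show G.dist w v < G.dist w u ↔ _
  rcases hG.dist_eq_add_one_or huv w with h | h <;> omega

lemma IsCCC.compl_edgeHalf_s16 (hG : IsCCC G) (huv : G.Adj u v) :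
    (edgeHalf G u v)ᶜ = edgeHalf G v u := by
  ext w
  rw [mem_compl_iff, hG.mem_edgeHalf_iff huv, hG.mem_edgeHalf_iff huv.symm]
  rcases hG.dist_eq_add_one_or huv w with h | h <;> omega

lemma IsCCC.notMem_edgeHalf_iff (hG : IsCCC G) (huv : G.Adj u v) :
    w ∉ edgeHalf G u v ↔ G.dist w v = G.dist w u + 1 := by
  rw [← mem_compl_iff, hG.compl_edgeHalf_s16 huv, hG.mem_edgeHalf_iff huv.symm]

lemma IsCCC.dist_eq_of_adj_of_mem_of_notMem (hG : IsCCC G) (huv : G.Adj u v) (hpr : G.Adj p r)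
    (hp : p ∈ edgeHalf G u v) (hr : r ∉ edgeHalf G u v) :
    G.dist r u = G.dist p v ∧ G.dist r v = G.dist p v + 1 := by
  have := (hG.mem_edgeHalf_iff huv).mp hp
  have := (hG.notMem_edgeHalf_iff huv).mp hr
  have := hpr.dist_le_dist_add_one u
  have := hpr.symm.dist_le_dist_add_one v
  omega

lemma IsCCC.vInterval_right_subset_edgeHalf (hG : IsCCC G) (huv : G.Adj u v)
    (hq : q ∈ edgeHalf G u v) : vInterval G q v ⊆ edgeHalf G u v := by
  intro m hm
  by_contra hmH
  have hm : G.dist q m + G.dist m v = G.dist q v := hm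
  have := (hG.notMem_edgeHalf_iff huv).mp hmH
  have := (hG.mem_edgeHalf_iff huv).mp hq
  have : G.dist q u ≤ G.dist q m + G.dist m u := hG.1.dist_triangle
  omega

lemma IsCCC.mem_edgeHalf_of_adj_of_adj (hG : IsCCC G) (huv : G.Adj u v)
    (hp : p ∈ edgeHalf G u v) (hq : q ∈ edgeHalf G u v) (hpq : G.dist p q = 2)
    (hpr : G.Adj p r) (hrq : G.Adj r q) : r ∈ edgeHalf G u v := by
  by_contra hr
  obtain ⟨hru, hrv⟩ := hG.dist_eq_of_adj_of_mem_of_notMem huv hpr hp hr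
  obtain ⟨hru', -⟩ := hG.dist_eq_of_adj_of_mem_of_notMem huv hrq.symm hq hr
  have hpu := (hG.mem_edgeHalf_iff huv).mp hp
  have hqu := (hG.mem_edgeHalf_iff huv).mp hq
  have hpr1 : G.dist p r = 1 := dist_eq_one_iff_adj.mpr hpr
  have hrq1 : G.dist r q = 1 := dist_eq_one_iff_adj.mpr hrq
  obtain ⟨m, ⟨hpqm, hqvm, hvpm⟩, -⟩ := hG.2 p q v
  have hpqm : G.dist p m + G.dist m q = 2 := hpq ▸ hpqm
  have hqvm : G.dist q m + G.dist m v = G.dist q v := hqvm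
  have hvpm : G.dist v m + G.dist m p = G.dist v p := hvpm
  have := G.dist_comm (u := m) (v := q)
  have := G.dist_comm (u := m) (v := p)
  have := G.dist_comm (u := m) (v := v)
  have := G.dist_comm (u := v) (v := p)
  have := G.dist_comm (u := r) (v := p)
  have := G.dist_comm (u := r) (v := q)
  have := G.dist_comm (u := u) (v := r)
  have := G.dist_comm (u := u) (v := m)
  have := G.dist_comm (u := u) (v := p)
  have : G.dist p u ≤ G.dist p m + G.dist m u := hG.1.dist_triangle
  have : G.dist m u ≤ G.dist m v + G.dist v u := hG.1.dist_triangle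
  have : G.dist v u = 1 := dist_eq_one_iff_adj.mpr huv.symm
  -- `r` and the median `m` of `p, q, v` are both medians of `p, q, u`, but differ in `dist · v`
  have hr : r ∈ vInterval G p q ∧ r ∈ vInterval G q u ∧ r ∈ vInterval G u p := by
    refine ⟨?_, ?_, ?_⟩ <;> (show _ + _ = _; omega)
  have hm : m ∈ vInterval G p q ∧ m ∈ vInterval G q u ∧ m ∈ vInterval G u p := by
    refine ⟨?_, ?_, ?_⟩ <;> (show _ + _ = _; omega)
  have hrm : r = m := (hG.2 p q u).unique hr hm
  subst hrm
  omega

lemma IsCCC.dist_add_dist_eq_add_two_of_notMem (hG : IsCCC G) (huv : G.Adj u v) {n : ℕ}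
    (IH : ∀ p' q', G.dist p' q' < n → p' ∈ edgeHalf G u v → q' ∈ edgeHalf G u v →
      vInterval G p' q' ⊆ edgeHalf G u v)
    (hpq : G.dist p q = n) (hp : p ∈ edgeHalf G u v) (hq : q ∈ edgeHalf G u v)
    (hr : r ∈ vInterval G p q) (hrH : r ∉ edgeHalf G u v) :
    n + G.dist q v = G.dist p v + 2 := by
  have hr : G.dist p r + G.dist r q = n := hpq ▸ hr
  obtain ⟨p₁, hpp₁, hp₁r⟩ := (hG.1 p r).exists_adj_dist_add_one fun h => hrH (h ▸ hp)
  have hp₁q : G.dist p₁ q + 1 = n := by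
    have : G.dist p₁ q ≤ G.dist p₁ r + G.dist r q := hG.1.dist_triangle
    have := hpp₁.dist_le_dist_add_one q
    omega
  have hp₁H : p₁ ∉ edgeHalf G u v := fun h =>
    hrH (IH p₁ q (by omega) h hq (show G.dist p₁ r + G.dist r q = G.dist p₁ q by omega))
  have hp₁v := (hG.dist_eq_of_adj_of_mem_of_notMem huv hpp₁ hp hp₁H).2
  obtain ⟨m, ⟨hp₁qm, hqvm, hvp₁m⟩, -⟩ := hG.2 p₁ q v
  have hmH : m ∈ edgeHalf G u v := hG.vInterval_right_subset_edgeHalf huv hq hqvm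
  have hp₁qm : G.dist p₁ m + G.dist m q = G.dist p₁ q := hp₁qm
  have hqvm : G.dist q m + G.dist m v = G.dist q v := hqvm
  have hvp₁m : G.dist v m + G.dist m p₁ = G.dist v p₁ := hvp₁m
  have := G.dist_comm (u := m) (v := q)
  have := G.dist_comm (u := m) (v := p₁)
  have := G.dist_comm (u := v) (v := p₁)
  have := G.dist_comm (u := m) (v := v)
  have : G.dist p q ≤ G.dist p m + G.dist m q := hG.1.dist_triangle
  have := hpp₁.dist_le_dist_add_one m
  have := dist_eq_one_iff_adj.mpr hpp₁
  -- if `m ≠ q`, then `p₁` lies between `p` and `m`, closer together than `p` and `q`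
  by_cases hmq : G.dist m q = 0
  · omega
  · exact absurd (IH p m (by omega) hp hmH (show G.dist p p₁ + G.dist p₁ m = G.dist p m by omega))
      hp₁H

lemma IsCCC.vInterval_subset_edgeHalf (hG : IsCCC G) (huv : G.Adj u v)
    (hp : p ∈ edgeHalf G u v) (hq : q ∈ edgeHalf G u v) : vInterval G p q ⊆ edgeHalf G u v := by
  suffices ∀ n p q, G.dist p q = n → p ∈ edgeHalf G u v → q ∈ edgeHalf G u v →
      vInterval G p q ⊆ edgeHalf G u v from this _ p q rfl hp hq
  intro n
  induction n using Nat.strong_induction_on with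
  | _ n IH =>
  intro p q hpq hp hq r hr
  by_contra hrH
  have IH' := fun p' q' h => IH _ h p' q' rfl
  have h₁ := hG.dist_add_dist_eq_add_two_of_notMem huv IH' hpq hp hq hr hrH
  have h₂ := hG.dist_add_dist_eq_add_two_of_notMem huv IH' (dist_comm.trans hpq) hq hp
    (mem_vInterval_comm.mp hr) hrH
  -- `h₁` and `h₂` force `G.dist p q = 2`, where `r` is a common neighbour of `p` and `q`
  have hr : G.dist p r + G.dist r q = n := hpq ▸ hr
  have : G.dist p r ≠ 0 := fun h => hrH (hG.1.dist_eq_zero_iff.mp h ▸ hp)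
  have : G.dist r q ≠ 0 := fun h => hrH (hG.1.dist_eq_zero_iff.mp h ▸ hq)
  exact hrH (hG.mem_edgeHalf_of_adj_of_adj huv hp hq (by omega)
    (dist_eq_one_iff_adj.mp (by omega)) (dist_eq_one_iff_adj.mp (by omega)))

lemma IsCCC.vInterval_subset_of_isHalfspace (hG : IsCCC G) {h : Set V} (hh : IsHalfspace G h)
    (hp : p ∈ h) (hq : q ∈ h) : vInterval G p q ⊆ h := by
  obtain ⟨u, v, huv, rfl⟩ := hh
  exact hG.vInterval_subset_edgeHalf huv hp hq

lemma IsCCC.isHalfspace_compl_s16 (hG : IsCCC G) {h : Set V} (hh : IsHalfspace G h) :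
    IsHalfspace G hᶜ := by
  obtain ⟨u, v, huv, rfl⟩ := hh
  exact ⟨v, u, huv.symm, hG.compl_edgeHalf_s16 huv⟩

lemma IsCCC.edgeHalf_eq_of_adj (hG : IsCCC G) (huv : G.Adj u v) (hpq : G.Adj p q)
    (hp : p ∉ edgeHalf G u v) (hq : q ∈ edgeHalf G u v) : edgeHalf G u v = edgeHalf G p q := by
  have hpq1 : G.dist p q = 1 := dist_eq_one_iff_adj.mpr hpq
  have hqp1 : G.dist q p = 1 := dist_eq_one_iff_adj.mpr hpq.symm
  have hp' : p ∈ edgeHalf G v u := hG.compl_edgeHalf_s16 huv ▸ hp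
  ext z
  rw [hG.mem_edgeHalf_iff hpq]
  constructor
  · intro hz
    rcases hG.dist_eq_add_one_or hpq z with h | h
    · exact h
    · exact absurd (hG.vInterval_subset_edgeHalf huv hz hq
        (show G.dist z p + G.dist p q = G.dist z q by omega)) hp
  · intro hz
    by_contra hz'
    rw [← mem_compl_iff, hG.compl_edgeHalf_s16 huv] at hz'
    have := hG.vInterval_subset_edgeHalf huv.symm hz' hp'
      (show G.dist z q + G.dist q p = G.dist z p by omega)
    rw [← hG.compl_edgeHalf_s16 huv] at this
    exact this hq

lemma IsCCC.dist_eq_two_of_adj_of_adj_s16 (hG : IsCCC G) (ha : G.Adj v a) (hb : G.Adj v b)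
    (hab : a ≠ b) : G.dist a b = 2 := by
  have := ha.symm.dist_le_dist_add_one b
  have := dist_eq_one_iff_adj.mpr hb
  have : G.dist a b ≠ 0 := fun h => hab (hG.1.dist_eq_zero_iff.mp h)
  have : G.dist a b ≠ 1 := fun h => by
    have := dist_eq_one_iff_adj.mpr ha
    rcases hG.dist_eq_add_one_or (dist_eq_one_iff_adj.mp h) v with h | h <;> omega
  omega

lemma IsCCC.disjoint_edgeHalf_of_not_spansSquare (hG : IsCCC G) (ha : G.Adj v a)
    (hb : G.Adj v b) (hab : a ≠ b) (hsq : ¬ SpansSquare G v a b) :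
    Disjoint (edgeHalf G v a) (edgeHalf G v b) := by
  refine disjoint_left.mpr fun p hpa hpb => hsq ?_
  have := (hG.mem_edgeHalf_iff ha).mp hpa
  have := (hG.mem_edgeHalf_iff hb).mp hpb
  have := hG.dist_eq_two_of_adj_of_adj_s16 ha hb hab
  -- the median of `p, a, b` completes the square
  obtain ⟨m, ⟨hpam, habm, hbpm⟩, -⟩ := hG.2 p a b
  have hpam : G.dist p m + G.dist m a = G.dist p a := hpam
  have habm : G.dist a m + G.dist m b = G.dist a b := habm
  have hbpm : G.dist b m + G.dist m p = G.dist b p := hbpm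
  have := G.dist_comm (u := m) (v := a)
  have := G.dist_comm (u := m) (v := b)
  have := G.dist_comm (u := m) (v := p)
  have := G.dist_comm (u := b) (v := p)
  refine ⟨m, fun hmv => ?_, dist_eq_one_iff_adj.mp (by omega), dist_eq_one_iff_adj.mp (by omega)⟩
  subst hmv
  omega

lemma NoExtremal.exists_disjoint_edgeHalf (hne : NoExtremal G) (hG : IsCCC G) (ha : G.Adj v a) :
    ∃ b, G.Adj v b ∧ b ≠ a ∧ Disjoint (edgeHalf G v a) (edgeHalf G v b) := by
  have hv := hne v
  simp only [Extremal, not_exists, not_and, not_forall] at hv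
  obtain ⟨b, hb, hba, hsq⟩ := hv a ha
  exact ⟨b, hb, hba, hG.disjoint_edgeHalf_of_not_spansSquare ha hb (Ne.symm hba) hsq⟩

lemma IsUltra.compl_mem_of_notMem {σ : Set (Set V)} {h : Set V} (hσ : IsUltra G σ)
    (hh : IsHalfspace G h) (hhσ : h ∉ σ) : hᶜ ∈ σ := by
  by_contra hc
  exact hhσ ((hσ.2.1 h hh).mpr hc)

lemma IsUltra.eq_princ_of_subset {σ : Set (Set V)} (hσ : IsUltra G σ) (hsub : σ ⊆ princ G v) :
    σ = princ G v := by
  refine hsub.antisymm fun t ⟨ht, hvt⟩ => ?_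
  by_contra htσ
  exact (hsub (hσ.compl_mem_of_notMem ht htσ)).2 hvt

lemma IsUltra.eq_princ_of_edgeHalf_mem (hG : IsCCC G) {σ : Set (Set V)} (hσ : IsUltra G σ)
    (ha : G.Adj v a) (hb : G.Adj v b) (hnbr : ∀ c, G.Adj v c → c = a ∨ c = b)
    (hσa : edgeHalf G a v ∈ σ) (hσb : edgeHalf G b v ∈ σ) : σ = princ G v := by
  refine hσ.eq_princ_of_subset fun t ht => ⟨hσ.1 t ht, ?_⟩
  obtain ⟨p, hpt, hpa⟩ := hσ.2.2 t ht _ hσa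
  obtain ⟨q, hqt, hqb⟩ := hσ.2.2 t ht _ hσb
  obtain ⟨m, ⟨hpqm, hqvm, hvpm⟩, -⟩ := hG.2 p q v
  have hmv : m = v := eq_of_forall_mem_edgeHalf hG.1 fun c hc => by
    rcases hnbr c hc with rfl | rfl
    · exact hG.vInterval_right_subset_edgeHalf ha.symm hpa (mem_vInterval_comm.mp hvpm)
    · exact hG.vInterval_right_subset_edgeHalf hb.symm hqb hqvm
  exact hmv ▸ hG.vInterval_subset_of_isHalfspace (hσ.1 t ht) hpt hqt hpqm

lemma mem_med_or_compl_mem_med {x y z : Set (Set V)} {t : Set V} (hx : IsUltra G x)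
    (hy : IsUltra G y) (hz : IsUltra G z) (ht : IsHalfspace G t) :
    t ∈ med x y z ∨ tᶜ ∈ med x y z := by
  have := hx.2.1 t ht
  have := hy.2.1 t ht
  have := hz.2.1 t ht
  simp only [med, mem_union, mem_inter_iff]
  tauto

lemma med_eq_princ_of_inter_subset {x y z : Set (Set V)} (hx : IsUltra G x) (hy : IsUltra G y)
    (hz : IsUltra G z) (hxy : x ∩ y ⊆ princ G v) (hyz : y ∩ z ⊆ princ G v)
    (hzx : z ∩ x ⊆ princ G v) : med x y z = princ G v := by
  have hsub : med x y z ⊆ princ G v := union_subset (union_subset hxy hyz) hzx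
  refine hsub.antisymm fun t ⟨ht, hvt⟩ => ?_
  exact (mem_med_or_compl_mem_med hx hy hz ht).resolve_right fun hc => (hsub hc).2 hvt

lemma exists_mem_mem_of_mem_med {x y z : Set (Set V)} {h k : Set V} (hh : h ∈ med x y z)
    (hk : k ∈ med x y z) : ∃ σ ∈ ({x, y, z} : Set (Set (Set V))), h ∈ σ ∧ k ∈ σ := by
  simp only [med, mem_union, mem_inter_iff] at hh hk
  simp only [mem_insert_iff, mem_singleton_iff, exists_eq_or_imp, exists_eq_left]
  tauto

lemma op_of_med_eq_princ {x y z : Set (Set V)} {A B : Set V} (hx : IsUltra G x)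
    (hy : IsUltra G y) (hmed : med x y z = princ G v) (hxA : ∀ t ∈ x, v ∉ t → t ⊆ A)
    (hyB : ∀ t ∈ y, v ∉ t → t ⊆ B) (hAB : Disjoint A B) : Op G x y z := by
  have hxy : x ∩ y ⊆ princ G v := hmed ▸ fun t ht => Or.inl (Or.inl ht)
  refine ⟨⟨v, hmed⟩, ?_⟩
  rw [hmed]
  ext σ
  constructor
  · rintro ⟨hσ, hσxy⟩
    by_contra hcon
    obtain ⟨hxm, hmy⟩ := not_or.mp hcon
    obtain ⟨h, ⟨hhx, hh, hvh⟩, hhσ⟩ := not_subset.mp fun hsub => hxm ⟨hσ, hsub⟩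
    obtain ⟨k, ⟨⟨hk, hvk⟩, hky⟩, hkσ⟩ := not_subset.mp fun hsub => hmy ⟨hσ, hsub⟩
    -- `hᶜ` and `kᶜ` meet inside `σ`, but lie in `B` and `A` respectively
    have hhy : hᶜ ∈ y := hy.compl_mem_of_notMem hh fun hhy => hhσ (hσxy ⟨hhx, hhy⟩)
    have hkx : kᶜ ∈ x := hx.compl_mem_of_notMem hk fun hkx => hkσ (hσxy ⟨hkx, hky⟩)
    obtain ⟨p, hph, hpk⟩ :=
      hσ.2.2 _ (hσ.compl_mem_of_notMem hh hhσ) _ (hσ.compl_mem_of_notMem hk hkσ)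
    exact disjoint_left.mp hAB (hxA _ hkx (fun h' => h' hvk) hpk) (hyB _ hhy (fun h' => h' hvh) hph)
  · rintro (⟨hσ, hσx⟩ | ⟨hσ, hσy⟩)
    · exact ⟨hσ, fun t ht => hσx ⟨ht.1, hxy ht⟩⟩
    · exact ⟨hσ, fun t ht => hσy ⟨hxy ht, ht.2⟩⟩

lemma IsGeodRay.mem_vInterval {r : ℕ → V} (hr : IsGeodRay G r) {i j k : ℕ} (hij : i ≤ j)
    (hjk : j ≤ k) : r j ∈ vInterval G (r i) (r k) := by
  show G.dist (r i) (r j) + G.dist (r j) (r k) = G.dist (r i) (r k)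
  rw [hr.2 i j hij, hr.2 j k hjk, hr.2 i k (hij.trans hjk)]
  omega

lemma IsGeodRay.eventually_mem_or_eventually_notMem (hG : IsCCC G) {r : ℕ → V}
    (hr : IsGeodRay G r) {h : Set V} (hh : IsHalfspace G h) :
    (∃ N, ∀ n, N ≤ n → r n ∈ h) ∨ ∃ N, ∀ n, N ≤ n → r n ∉ h := by
  by_contra! hcon
  obtain ⟨hout, hin⟩ := hcon
  obtain ⟨i, -, hi⟩ := hin 0
  obtain ⟨j, hij, hj⟩ := hout i
  obtain ⟨k, hjk, hk⟩ := hin j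
  exact hj (hG.vInterval_subset_of_isHalfspace hh hi hk (hr.mem_vInterval hij hjk))

lemma IsGeodRay.isUltra_rayEnd (hG : IsCCC G) {r : ℕ → V} (hr : IsGeodRay G r) :
    IsUltra G (rayEnd G r) := by
  refine ⟨fun t ht => ht.1, fun t ht => ⟨?_, fun hc => ?_⟩, ?_⟩
  · rintro ⟨-, N, hN⟩ ⟨-, M, hM⟩
    exact hM (max N M) (le_max_right _ _) (hN _ (le_max_left _ _))
  · rcases hr.eventually_mem_or_eventually_notMem hG ht with hin | hout
    · exact ⟨ht, hin⟩
    · exact absurd ⟨hG.isHalfspace_compl_s16 ht, hout⟩ hc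
  · rintro s ⟨-, N, hN⟩ t ⟨-, M, hM⟩
    exact ⟨r (max N M), hN _ (le_max_left _ _), hM _ (le_max_right _ _)⟩

lemma IsGeodRay.edgeHalf_mem_rayEnd {r : ℕ → V} (hr : IsGeodRay G r) (n : ℕ) :
    edgeHalf G (r n) (r (n + 1)) ∈ rayEnd G r := by
  refine ⟨⟨_, _, hr.1 n, rfl⟩, n + 1, fun k hk => ?_⟩
  show G.dist (r k) (r (n + 1)) < G.dist (r k) (r n)
  rw [dist_comm, hr.2 _ _ hk, dist_comm, hr.2 _ _ (by omega)]
  omega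

lemma IsGeodRay.rayEnd_ne_princ {r : ℕ → V} (hr : IsGeodRay G r) (w : V) :
    rayEnd G r ≠ princ G w := by
  intro hw
  -- `G.dist w (r n)` would decrease forever
  have hdec : ∀ n, G.dist w (r (n + 1)) < G.dist w (r n) := fun n =>
    (hw ▸ hr.edgeHalf_mem_rayEnd n).2
  have hbound : ∀ n, G.dist w (r n) + n ≤ G.dist w (r 0) := by
    intro n
    induction n with
    | zero => rfl
    | succ n ih => have := hdec n; omega
  have := hbound (G.dist w (r 0) + 1)
  omega

lemma IsGeodRay.isBdryPt_rayEnd (hG : IsCCC G) {r : ℕ → V} (hr : IsGeodRay G r) :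
    IsBdryPt G (rayEnd G r) :=
  ⟨hr.isUltra_rayEnd hG, hr.rayEnd_ne_princ⟩

def IsNestedRay (G : SimpleGraph V) (r : ℕ → V) : Prop :=
  (∀ n, G.Adj (r n) (r (n + 1))) ∧ Antitone fun n => edgeHalf G (r n) (r (n + 1))

lemma IsNestedRay.isGeodRay (hG : IsCCC G) {r : ℕ → V} (hr : IsNestedRay G r) :
    IsGeodRay G r := by
  refine ⟨hr.1, fun m n hmn => ?_⟩
  induction n, hmn using Nat.le_induction with
  | base => simp
  | succ n hmn ih =>
    have hout : r m ∉ edgeHalf G (r n) (r (n + 1)) := fun h => left_notMem_edgeHalf (hr.2 hmn h)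
    have := (hG.notMem_edgeHalf_iff (hr.1 n)).mp hout
    omega

lemma IsNestedRay.rayStraight {r : ℕ → V} (hr : IsNestedRay G r) : RayStraight G r := by
  intro m n ht
  rcases le_total m n with hmn | hnm
  · obtain ⟨-, -, ⟨z, hzm, hzn⟩, -⟩ := ht
    exact hzm (hr.2 hmn hzn)
  · obtain ⟨-, ⟨z, hzm, hzn⟩, -, -⟩ := ht
    exact hzn (hr.2 hnm hzm)

lemma IsNestedRay.subset_of_mem_rayEnd (hG : IsCCC G) {r : ℕ → V} (hr : IsNestedRay G r)
    (h0 : r 0 = v) (h1 : r 1 = a) {t : Set V} (ht : t ∈ rayEnd G r) (hvt : v ∉ t) :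
    t ⊆ edgeHalf G v a := by
  subst h0 h1
  obtain ⟨⟨u, w, huw, rfl⟩, N, hN⟩ := ht
  -- the ray enters `t` along one of its own edges, so `t` is one of its nested halfspaces
  obtain ⟨m, hm, hm1⟩ := Nat.exists_not_and_succ_of_not_zero_of_exists
    (p := fun n => r n ∈ edgeHalf G u w) hvt ⟨N, hN N le_rfl⟩
  show edgeHalf G u w ⊆ _
  rw [hG.edgeHalf_eq_of_adj huw (hr.1 m) hm hm1]
  exact hr.2 (Nat.zero_le m)

lemma exists_isNestedRay (hG : IsCCC G) (hne : NoExtremal G) (hva : G.Adj v a) :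
    ∃ r, IsNestedRay G r ∧ r 0 = v ∧ r 1 = a := by
  have hstep : ∀ p q, ∃ b, G.Adj p q → G.Adj q b ∧ edgeHalf G q b ⊆ edgeHalf G p q := by
    intro p q
    by_cases hpq : G.Adj p q
    · obtain ⟨b, hqb, -, hdisj⟩ := hne.exists_disjoint_edgeHalf hG hpq.symm
      exact ⟨b, fun _ => ⟨hqb, hG.compl_edgeHalf_s16 hpq.symm ▸ hdisj.subset_compl_left⟩⟩
    · exact ⟨p, fun h => absurd h hpq⟩
  choose next hnext using hstep
  let s : ℕ → V × V := fun n => (fun e : V × V => (e.2, next e.1 e.2))^[n] (v, a)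
  have hs : ∀ n, s (n + 1) = ((s n).2, next (s n).1 (s n).2) := fun n =>
    Function.iterate_succ_apply' _ _ _
  have hadj : ∀ n, G.Adj (s n).1 (s n).2 := by
    intro n
    induction n with
    | zero => exact hva
    | succ n ih => rw [hs]; exact (hnext _ _ ih).1
  refine ⟨fun n => (s n).1, ⟨fun n => ?_, antitone_nat_of_succ_le fun n => ?_⟩, rfl, rfl⟩
  · show G.Adj (s n).1 (s (n + 1)).1
    rw [hs]
    exact hadj n
  · simp only [hs]
    exact (hnext _ _ (hadj n)).2

lemma inter_rayEnd_subset_princ (hG : IsCCC G) {r s : ℕ → V} (hr : IsNestedRay G r)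
    (hs : IsNestedRay G s) (hr0 : r 0 = v) (hs0 : s 0 = v) (hrs : r 1 ≠ s 1) :
    rayEnd G r ∩ rayEnd G s ⊆ princ G v := by
  rintro t ⟨htr, hts⟩
  refine ⟨htr.1, by_contra fun hvt => ?_⟩
  have hvr : G.Adj v (r 1) := hr0 ▸ hr.1 0
  have hvs : G.Adj v (s 1) := hs0 ▸ hs.1 0
  have htA := hr.subset_of_mem_rayEnd hG hr0 rfl htr hvt
  -- `s` ends up in `t ⊆ edgeHalf G v (r 1)`, a halfspace it can only enter across its first edge
  have hAs : edgeHalf G v (r 1) ∈ rayEnd G s := by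
    obtain ⟨N, hN⟩ := hts.2
    exact ⟨⟨v, r 1, hvr, rfl⟩, N, fun n hn => htA (hN n hn)⟩
  exact notMem_edgeHalf_of_adj hvr hvs hrs
    (hs.subset_of_mem_rayEnd hG hs0 rfl hAs left_notMem_edgeHalf (right_mem_edgeHalf hvr))

lemma exists_adj_ne_ne_of_not_skinny (hsk : ¬ Skinny G v) (ha : G.Adj v a) (hb : G.Adj v b)
    (hab : a ≠ b) : ∃ c, G.Adj v c ∧ c ≠ a ∧ c ≠ b := by
  by_contra! h
  refine hsk (encard_eq_two.mpr ⟨a, b, hab, Set.ext fun c => ⟨fun hc => ?_, ?_⟩⟩)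
  · by_cases hca : c = a
    · exact Or.inl hca
    · exact Or.inr (h c hc hca)
  · rintro (rfl | rfl)
    exacts [ha, hb]

lemma exists_straight_op_of_not_skinny [Nontrivial V] (hG : IsCCC G) (hne : NoExtremal G)
    (hsk : ¬ Skinny G v) :
    ∃ x y z : Set (Set V), IsBdryPt G x ∧ IsBdryPt G y ∧ IsBdryPt G z ∧
      IsStraightPt G x ∧ IsStraightPt G y ∧ IsStraightPt G z ∧
      med x y z = princ G v ∧ Op G x y z := by
  obtain ⟨a₁, ha₁⟩ := hG.1.preconnected.exists_adj_of_nontrivial v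
  obtain ⟨a₂, ha₂, ha₂₁, hdisj⟩ := hne.exists_disjoint_edgeHalf hG ha₁
  obtain ⟨a₃, ha₃, ha₃₁, ha₃₂⟩ := exists_adj_ne_ne_of_not_skinny hsk ha₁ ha₂ (Ne.symm ha₂₁)
  obtain ⟨r₁, hr₁, h₁0, h₁1⟩ := exists_isNestedRay hG hne ha₁
  obtain ⟨r₂, hr₂, h₂0, h₂1⟩ := exists_isNestedRay hG hne ha₂
  obtain ⟨r₃, hr₃, h₃0, h₃1⟩ := exists_isNestedRay hG hne ha₃
  have hend : ∀ r, IsNestedRay G r → IsBdryPt G (rayEnd G r) ∧ IsStraightPt G (rayEnd G r) :=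
    fun r hr => ⟨(hr.isGeodRay hG).isBdryPt_rayEnd hG, r, hr.isGeodRay hG, hr.rayStraight, rfl⟩
  have hmed : med (rayEnd G r₁) (rayEnd G r₂) (rayEnd G r₃) = princ G v :=
    med_eq_princ_of_inter_subset ((hr₁.isGeodRay hG).isUltra_rayEnd hG)
      ((hr₂.isGeodRay hG).isUltra_rayEnd hG) ((hr₃.isGeodRay hG).isUltra_rayEnd hG)
      (inter_rayEnd_subset_princ hG hr₁ hr₂ h₁0 h₂0 (by rw [h₁1, h₂1]; exact Ne.symm ha₂₁))
      (inter_rayEnd_subset_princ hG hr₂ hr₃ h₂0 h₃0 (by rw [h₂1, h₃1]; exact Ne.symm ha₃₂))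
      (inter_rayEnd_subset_princ hG hr₃ hr₁ h₃0 h₁0 (by rw [h₃1, h₁1]; exact ha₃₁))
  refine ⟨_, _, _, (hend r₁ hr₁).1, (hend r₂ hr₂).1, (hend r₃ hr₃).1, (hend r₁ hr₁).2,
    (hend r₂ hr₂).2, (hend r₃ hr₃).2, hmed, ?_⟩
  exact op_of_med_eq_princ ((hr₁.isGeodRay hG).isUltra_rayEnd hG)
    ((hr₂.isGeodRay hG).isUltra_rayEnd hG) hmed (fun _ => hr₁.subset_of_mem_rayEnd hG h₁0 h₁1)
    (fun _ => hr₂.subset_of_mem_rayEnd hG h₂0 h₂1) hdisj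

lemma not_skinny_of_med_eq_princ (hG : IsCCC G) {x y z : Set (Set V)} (hx : IsBdryPt G x)
    (hy : IsBdryPt G y) (hz : IsBdryPt G z) (hmed : med x y z = princ G v) : ¬ Skinny G v := by
  intro hsk
  obtain ⟨a, b, -, hnbr⟩ := encard_eq_two.mp hsk
  have hnbr : ∀ c, G.Adj v c ↔ c = a ∨ c = b := fun c => by simpa using Set.ext_iff.mp hnbr c
  have ha := (hnbr a).mpr (Or.inl rfl)
  have hb := (hnbr b).mpr (Or.inr rfl)
  have hmem : ∀ c, G.Adj v c → edgeHalf G c v ∈ med x y z := fun c hc =>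
    hmed ▸ ⟨⟨c, v, hc.symm, rfl⟩, right_mem_edgeHalf hc.symm⟩
  obtain ⟨σ, hσ, hσa, hσb⟩ := exists_mem_mem_of_mem_med (hmem a ha) (hmem b hb)
  have hσ : IsBdryPt G σ := by
    rcases hσ with rfl | rfl | rfl <;> assumption
  exact hσ.2 v (hσ.1.eq_princ_of_edgeHalf_mem hG ha hb (fun c => (hnbr c).mp) hσa hσb)

end CCCR

/-- Lemma `skinny points`: in a CAT(0) cube complex with at
least two vertices and no extremal vertices, a vertex `v` is not skinny if and
only if there are straight boundary points `x, y, z` with `m(x,y,z) = v` and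
`x op_z y`. -/
theorem stmt16 {V : Type*} (G : SimpleGraph V) (hG : IsCCC G)
    (hnt : Nontrivial V) (hne : NoExtremal G) (v : V) :
    ¬ Skinny G v ↔
      ∃ x y z : Set (Set V), IsBdryPt G x ∧ IsBdryPt G y ∧ IsBdryPt G z ∧
        IsStraightPt G x ∧ IsStraightPt G y ∧ IsStraightPt G z ∧
        med x y z = princ G v ∧ Op G x y z :=
  ⟨exists_straight_op_of_not_skinny hG hne,
    fun ⟨_, _, _, hx, hy, hz, _, _, _, hmed, _⟩ => not_skinny_of_med_eq_princ hG hx hy hz hmed⟩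
end
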